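/- For each integer q ≥ 0 there is a unique 𝔽₂-linear map ψ_q : ⋀^q V → I^q/I^{q+1} sending each decomposable element v₁ ∧ ⋯ ∧ v_q to the residue class of the product ([0]+[v₁])·([0]+[v₂])⋯([0]+[v_q]) modulo I^{q+1}, and this map ψ_q is an isomorphism of 𝔽₂-vector spaces. -/

import Mathlib

open AddMonoidAlgebra

/-- The canonical basis element `[v]` of the group algebra `𝔽₂[V]` of the additive group `V`. -/
noncomputable def ga {V : Type*} [AddCommMonoid V] (v : V) :
    AddMonoidAlgebra (ZMod 2) V :=
  AddMonoidAlgebra.single v 1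

/-- The fundamental class `[H] = ∑_{v ∈ H} [v] ∈ 𝔽₂[V]` of a linear subspace `H ⊆ V`. -/
noncomputable def fundClass {V : Type*} [AddCommGroup V] [Module (ZMod 2) V]
    (H : Submodule (ZMod 2) V) : AddMonoidAlgebra (ZMod 2) V :=
  ∑ᶠ v ∈ (H : Set V), ga v

/-- The augmentation map `μ : 𝔽₂[V] → 𝔽₂`, sending each `[v]` to `1`. -/
noncomputable def aug (V : Type*) [AddCommMonoid V] :
    AddMonoidAlgebra (ZMod 2) V →ₐ[ZMod 2] ZMod 2 :=
  AddMonoidAlgebra.lift (ZMod 2) (ZMod 2) V 1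

/-- The augmentation ideal `I ⊆ 𝔽₂[V]`, i.e. the kernel of the augmentation map. -/
noncomputable def augIdeal (V : Type*) [AddCommMonoid V] :
    Ideal (AddMonoidAlgebra (ZMod 2) V) :=
  RingHom.ker (aug V).toRingHom

/-- The `𝔽₂`-linear map `⋀^q V → ⋀^q W` functorially induced on `q`-th exterior powers
by a linear map `f : V → W`. -/
noncomputable def extMap {R : Type*} [CommRing R] {M N : Type*} [AddCommGroup M] [Module R M]
    [AddCommGroup N] [Module R N] (q : ℕ) (f : M →ₗ[R] N) :
    ⋀[R]^q M →ₗ[R] ⋀[R]^q N :=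
  (ExteriorAlgebra.map f).toLinearMap.restrict (p := ⋀[R]^q M) (q := ⋀[R]^q N)
    (fun x hx => by
      have h : Submodule.map (ExteriorAlgebra.map f).toLinearMap (⋀[R]^q M) ≤ ⋀[R]^q N := by
        rw [ExteriorAlgebra.exteriorPower, Submodule.map_pow, ExteriorAlgebra.ι_range_map_map]
        exact pow_le_pow_left' (LinearMap.map_le_range) q
      exact h ⟨x, hx, rfl⟩)

/-!
Write `x_v = [0] + [v]`. Then `x_{a+b} = x_a + x_b + x_a x_b` and `x_v² = 0`, so
`v ↦ ∏ᵢ x_{vᵢ}` is alternating and multilinear modulo `I^{q+1}`, which gives `ψ_q`.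
For a basis `e` of `V`, the monomials `x_S = ∏_{i ∈ S} x_{eᵢ}` span `𝔽₂[V]`, because
`[∑_{i ∈ S} eᵢ] = ∏_{i ∈ S} (1 + x_{eᵢ}) = ∑_{T ⊆ S} x_T`; there are `2 ^ dim V` of them, so they
form a basis. Since `x_S x_T` is `x_{S ∪ T}` or `0`, `I^q` is spanned by the `x_S` with
`q ≤ |S|`, and the classes of the `x_S` with `|S| = q` form a basis of `I^q/I^{q+1}`. These are
the images under `ψ_q` of the basis `e_S` of `⋀^q V`.
-/

open Module exteriorPower

section GroupAlgebra

variable {V : Type*} [AddCommMonoid V]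

lemma ga_zero : ga (0 : V) = 1 := rfl

lemma ga_add (a b : V) : ga (a + b) = ga a * ga b := by
  simp [ga, AddMonoidAlgebra.single_mul_single]

lemma ga_sum {κ : Type*} (s : Finset κ) (f : κ → V) : ga (∑ i ∈ s, f i) = ∏ i ∈ s, ga (f i) :=
  map_prod (AddMonoidAlgebra.of (ZMod 2) V) (fun i => Multiplicative.ofAdd (f i)) s

lemma aug_ga (v : V) : aug V (ga v) = 1 := by
  simp [aug, ga]

variable (V) in
lemma two_eq_zero_addMonoidAlgebra : (2 : AddMonoidAlgebra (ZMod 2) V) = 0 :=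
  one_add_one_eq_two.symm.trans (ZModModule.add_self 1)

noncomputable def onePlusGa (v : V) : AddMonoidAlgebra (ZMod 2) V := ga 0 + ga v

lemma onePlusGa_mem_augIdeal (v : V) : onePlusGa v ∈ augIdeal V := by
  change aug V (ga 0 + ga v) = 0
  rw [map_add, aug_ga, aug_ga]
  rfl

lemma onePlusGa_zero : onePlusGa (0 : V) = 0 := ZModModule.add_self _

lemma ga_eq_one_add_onePlusGa (v : V) : ga v = 1 + onePlusGa v := by
  rw [onePlusGa, ga_zero, ← add_assoc, ZModModule.add_self, zero_add]

lemma onePlusGa_add (a b : V) :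
    onePlusGa (a + b) = onePlusGa a + onePlusGa b + onePlusGa a * onePlusGa b := by
  simp only [onePlusGa, ga_zero, ga_add a b]
  linear_combination (-(1 + ga a + ga b)) * two_eq_zero_addMonoidAlgebra V

lemma prod_onePlusGa_mem_augIdeal_pow {κ : Type*} (s : Finset κ) (f : κ → V) :
    ∏ i ∈ s, onePlusGa (f i) ∈ augIdeal V ^ s.card := by
  rw [← Finset.prod_const]
  exact Ideal.prod_mem_prod fun i _ => onePlusGa_mem_augIdeal (f i)

lemma prod_onePlusGa_update_add_sub_mem {κ : Type*} [Fintype κ] [DecidableEq κ]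
    (v : κ → V) (j : κ) (a b : V) :
    ∏ i, onePlusGa (Function.update v j (a + b) i) - ∏ i, onePlusGa (Function.update v j a i)
      - ∏ i, onePlusGa (Function.update v j b i) ∈ augIdeal V ^ (Fintype.card κ + 1) := by
  have hupdate (c : V) : ∏ i, onePlusGa (Function.update v j c i) =
      onePlusGa c * ∏ i ∈ Finset.univ \ {j}, onePlusGa (v i) := by
    rw [← Finset.prod_update_of_mem (Finset.mem_univ j)]
    simp only [Function.apply_update (fun _ => onePlusGa)]
  have hcard : Fintype.card κ + 1 = 1 + 1 + (Finset.univ \ {j}).card := by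
    rw [Finset.card_sdiff_of_subset (Finset.subset_univ _), Finset.card_singleton,
      Finset.card_univ]
    have := Fintype.card_pos_iff.2 ⟨j⟩
    omega
  rw [hupdate, hupdate, hupdate, onePlusGa_add, hcard, pow_add, pow_add, pow_one]
  convert Ideal.mul_mem_mul (Ideal.mul_mem_mul (onePlusGa_mem_augIdeal a)
    (onePlusGa_mem_augIdeal b)) (prod_onePlusGa_mem_augIdeal_pow _ v) using 1
  ring

end GroupAlgebra

section ExteriorPowerMap

variable {V : Type*} [AddCommGroup V] [Module (ZMod 2) V]

lemma onePlusGa_mul_self (v : V) : onePlusGa v * onePlusGa v = 0 := by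
  have hsq : ga v * ga v = 1 := by rw [← ga_add, ZModModule.add_self, ga_zero]
  simp only [onePlusGa, ga_zero]
  linear_combination (1 + ga v) * two_eq_zero_addMonoidAlgebra V + hsq

lemma prod_onePlusGa_eq_zero_of_eq {κ : Type*} [Fintype κ] [DecidableEq κ] {v : κ → V} {i j : κ}
    (hv : v i = v j) (hij : i ≠ j) : ∏ k, onePlusGa (v k) = 0 := by
  rw [← Finset.mul_prod_erase _ _ (Finset.mem_univ i),
    ← Finset.mul_prod_erase _ _ (Finset.mem_erase.2 ⟨hij.symm, Finset.mem_univ j⟩),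
    ← mul_assoc, hv, onePlusGa_mul_self, zero_mul]

noncomputable def prodOnePlusGaAlternating (q : ℕ) :
    V [⋀^Fin q]→ₗ[ZMod 2]
      (AddMonoidAlgebra (ZMod 2) V ⧸ (augIdeal V ^ (q + 1)).restrictScalars (ZMod 2)) where
  toFun v := Submodule.Quotient.mk (∏ i, onePlusGa (v i))
  map_update_add' v j a b := by
    rw [← sub_eq_zero, ← Submodule.Quotient.mk_add, ← Submodule.Quotient.mk_sub,
      Submodule.Quotient.mk_eq_zero, Submodule.restrictScalars_mem, ← sub_sub]
    simpa using prod_onePlusGa_update_add_sub_mem v j a b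
  map_update_smul' v j c a := by
    obtain rfl | rfl : c = 0 ∨ c = 1 := by revert c; decide
    · rw [zero_smul, zero_smul, Finset.prod_eq_zero (Finset.mem_univ j)
        (by rw [Function.update_self, onePlusGa_zero]), Submodule.Quotient.mk_zero]
    · rw [one_smul, one_smul]
  map_eq_zero_of_eq' v i j hv hij := by
    classical
    rw [prod_onePlusGa_eq_zero_of_eq hv hij, Submodule.Quotient.mk_zero]

noncomputable def exteriorPowerToAugQuotient (q : ℕ) :
    ⋀[ZMod 2]^q V →ₗ[ZMod 2]
      (AddMonoidAlgebra (ZMod 2) V ⧸ (augIdeal V ^ (q + 1)).restrictScalars (ZMod 2)) :=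
  alternatingMapLinearEquiv (prodOnePlusGaAlternating q)

lemma exteriorPowerToAugQuotient_ιMulti (q : ℕ) (v : Fin q → V) :
    exteriorPowerToAugQuotient q (ιMulti (ZMod 2) q v) =
      Submodule.Quotient.mk (∏ i, onePlusGa (v i)) :=
  alternatingMapLinearEquiv_apply_ιMulti _ v

lemma eq_exteriorPowerToAugQuotient {q : ℕ} {ψ : ⋀[ZMod 2]^q V →ₗ[ZMod 2]
      (AddMonoidAlgebra (ZMod 2) V ⧸ (augIdeal V ^ (q + 1)).restrictScalars (ZMod 2))}
    (h : ∀ v : Fin q → V, ψ (ιMulti (ZMod 2) q v) = Submodule.Quotient.mk (∏ i, onePlusGa (v i))) :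
    ψ = exteriorPowerToAugQuotient q :=
  linearMap_ext <| AlternatingMap.ext fun v =>
    (h v).trans (exteriorPowerToAugQuotient_ιMulti q v).symm

end ExteriorPowerMap

lemma Module.Basis.linearIndependent_mkQ_span_image {R M ι : Type*} [Ring R] [AddCommGroup M]
    [Module R M] (b : Basis ι R M) {s t : Set ι} (hst : Disjoint s t) :
    LinearIndependent R (fun i : t => (Submodule.span R (b '' s)).mkQ (b i)) := by
  refine (b.linearIndependent.comp _ Subtype.val_injective).map ?_
  rw [Submodule.ker_mkQ, Set.range_comp, Subtype.range_coe]
  exact (b.linearIndependent.disjoint_span_image hst).symm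

section Monomials

variable {V ι : Type*} [AddCommGroup V] [Module (ZMod 2) V] (e : Basis ι (ZMod 2) V)

noncomputable def augMonomial (S : Finset ι) : AddMonoidAlgebra (ZMod 2) V :=
  ∏ i ∈ S, onePlusGa (e i)

lemma ga_sum_basis (S : Finset ι) : ga (∑ i ∈ S, e i) = ∑ T ∈ S.powerset, augMonomial e T := by
  rw [ga_sum]
  simp only [ga_eq_one_add_onePlusGa, augMonomial]
  exact Finset.prod_one_add S

lemma Module.Basis.sum_support_repr_eq (v : V) : ∑ i ∈ (e.repr v).support, e i = v := by
  conv_rhs => rw [← e.linearCombination_repr v, Finsupp.linearCombination_apply, Finsupp.sum]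
  refine Finset.sum_congr rfl fun i hi => ?_
  obtain h | h : e.repr v i = 0 ∨ e.repr v i = 1 := by generalize e.repr v i = c; revert c; decide
  · exact absurd h (Finsupp.mem_support_iff.1 hi)
  · rw [h, one_smul]

lemma span_augMonomial : Submodule.span (ZMod 2) (Set.range (augMonomial e)) = ⊤ := by
  rw [eq_top_iff, ← (AddMonoidAlgebra.basis V (ZMod 2)).span_eq, Submodule.span_le]
  rintro _ ⟨v, rfl⟩
  change ga v ∈ _
  rw [← e.sum_support_repr_eq v, ga_sum_basis]
  exact Submodule.sum_mem _ fun T _ => Submodule.subset_span ⟨T, rfl⟩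

lemma augMonomial_mul_of_disjoint [DecidableEq ι] {S T : Finset ι} (h : Disjoint S T) :
    augMonomial e S * augMonomial e T = augMonomial e (S ∪ T) :=
  (Finset.prod_union h).symm

lemma augMonomial_mul_of_not_disjoint {S T : Finset ι} (h : ¬ Disjoint S T) :
    augMonomial e S * augMonomial e T = 0 := by
  classical
  obtain ⟨i, hiS, hiT⟩ := Finset.not_disjoint_iff.1 h
  rw [augMonomial, augMonomial, ← Finset.mul_prod_erase _ _ hiS, ← Finset.mul_prod_erase _ _ hiT,
    mul_mul_mul_comm, onePlusGa_mul_self, zero_mul]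

lemma aug_augMonomial_of_nonempty {S : Finset ι} (h : S.Nonempty) : aug V (augMonomial e S) = 0 := by
  obtain ⟨i, hi⟩ := h
  rw [augMonomial, map_prod]
  exact Finset.prod_eq_zero hi (onePlusGa_mem_augIdeal (e i))

lemma augMonomial_mul_mem_span {n : ℕ} {S T : Finset ι} (h : n ≤ S.card + T.card) :
    augMonomial e S * augMonomial e T ∈
      Submodule.span (ZMod 2) (augMonomial e '' {U | n ≤ U.card}) := by
  classical
  by_cases hST : Disjoint S T
  · rw [augMonomial_mul_of_disjoint e hST]
    exact Submodule.subset_span ⟨S ∪ T, h.trans (Finset.card_union_of_disjoint hST).ge, rfl⟩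
  · rw [augMonomial_mul_of_not_disjoint e hST]
    exact Submodule.zero_mem _

lemma augMonomial_mem_augIdeal_pow {q : ℕ} {S : Finset ι} (h : q ≤ S.card) :
    augMonomial e S ∈ augIdeal V ^ q :=
  Ideal.pow_le_pow_right h (prod_onePlusGa_mem_augIdeal_pow S e)

variable [Fintype ι]

noncomputable def augMonomialBasis : Basis (Finset ι) (ZMod 2) (AddMonoidAlgebra (ZMod 2) V) :=
  basisOfTopLeSpanOfCardEqFinrank (augMonomial e) (span_augMonomial e).ge <| by
    let := Module.fintypeOfFintype e
    rw [finrank_eq_card_basis (AddMonoidAlgebra.basis V (ZMod 2)), Module.card_fintype e,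
      Fintype.card_finset, ZMod.card]

@[simp]
lemma coe_augMonomialBasis : ⇑(augMonomialBasis e) = augMonomial e :=
  coe_basisOfTopLeSpanOfCardEqFinrank _ _ _

lemma augMonomialBasis_coord_empty : (augMonomialBasis e).coord ∅ = (aug V).toLinearMap := by
  refine (augMonomialBasis e).ext fun S => ?_
  rw [Basis.coord_apply, Basis.repr_self, coe_augMonomialBasis]
  obtain rfl | hS := S.eq_empty_or_nonempty
  · simp [augMonomial]
  · rw [Finsupp.single_eq_of_ne (Finset.nonempty_iff_ne_empty.1 hS).symm]
    exact (aug_augMonomial_of_nonempty e hS).symm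

lemma restrictScalars_augIdeal_le_span :
    (augIdeal V).restrictScalars (ZMod 2) ≤
      Submodule.span (ZMod 2) (augMonomial e '' {S | 1 ≤ S.card}) := by
  intro a ha
  rw [← coe_augMonomialBasis e, Basis.mem_span_image]
  intro S hS
  rw [Finset.mem_coe, Finsupp.mem_support_iff] at hS
  refine Finset.one_le_card.2 (Finset.nonempty_iff_ne_empty.2 ?_)
  rintro rfl
  exact hS (LinearMap.congr_fun (augMonomialBasis_coord_empty e) a ▸ ha)

theorem restrictScalars_augIdeal_pow (q : ℕ) :
    (augIdeal V ^ q).restrictScalars (ZMod 2) =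
      Submodule.span (ZMod 2) (augMonomial e '' {S | q ≤ S.card}) := by
  refine le_antisymm ?_ (Submodule.span_le.2 ?_)
  · induction q with
    | zero => simp [span_augMonomial]
    | succ q ih =>
      rw [pow_succ, Submodule.restrictScalars_mul]
      refine (mul_le_mul' ih (restrictScalars_augIdeal_le_span e)).trans ?_
      rw [Submodule.span_mul_span, Submodule.span_le, Set.mul_subset_iff]
      rintro _ ⟨S, hS, rfl⟩ _ ⟨T, hT, rfl⟩
      exact augMonomial_mul_mem_span e (add_le_add hS hT)
  · rintro _ ⟨S, hS, rfl⟩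
    exact augMonomial_mem_augIdeal_pow e hS

end Monomials

section Isomorphism

variable {V ι : Type*} [AddCommGroup V] [Module (ZMod 2) V] [LinearOrder ι]
  (e : Basis ι (ZMod 2) V) (q : ℕ)

lemma exteriorPowerToAugQuotient_basis (s : Set.powersetCard ι q) :
    exteriorPowerToAugQuotient q (e.exteriorPower q s) =
      Submodule.Quotient.mk (augMonomial e s) := by
  rw [exteriorPower.basis_apply, ιMulti_family, exteriorPowerToAugQuotient_ιMulti, augMonomial,
    ← Finset.map_orderEmbOfFin_univ s.val s.prop, Finset.prod_map]
  rfl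

variable [Fintype ι]

lemma linearIndependent_exteriorPowerToAugQuotient_comp_basis :
    LinearIndependent (ZMod 2) (exteriorPowerToAugQuotient q ∘ e.exteriorPower q) := by
  have hdisj : Disjoint {S : Finset ι | q + 1 ≤ S.card} (Set.powersetCard ι q) :=
    Set.disjoint_left.2 fun S (hS : q + 1 ≤ S.card) (hS' : S.card = q) => by omega
  have h := (augMonomialBasis e).linearIndependent_mkQ_span_image hdisj
  rw [coe_augMonomialBasis, ← restrictScalars_augIdeal_pow e (q + 1)] at h
  rwa [show exteriorPowerToAugQuotient q ∘ e.exteriorPower q = _ from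
    funext (exteriorPowerToAugQuotient_basis e q)]

lemma map_mkQ_augIdeal_pow_eq_span :
    ((augIdeal V ^ q).restrictScalars (ZMod 2)).map
        ((augIdeal V ^ (q + 1)).restrictScalars (ZMod 2)).mkQ =
      Submodule.span (ZMod 2) (Set.range (exteriorPowerToAugQuotient q ∘ e.exteriorPower q)) := by
  have hsplit : {S : Finset ι | q ≤ S.card} = Set.powersetCard ι q ∪ {S | q + 1 ≤ S.card} := by
    ext S
    simp only [Set.mem_union, Set.mem_ofPred_eq, Set.powersetCard.mem_iff]
    omega
  rw [restrictScalars_augIdeal_pow e q, hsplit, Set.image_union, Submodule.span_union,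
    Submodule.map_sup, ← restrictScalars_augIdeal_pow e (q + 1), Submodule.mkQ_map_self,
    sup_bot_eq, Submodule.map_span, Set.image_image, Set.image_eq_range]
  rw [show exteriorPowerToAugQuotient q ∘ e.exteriorPower q = _ from
    funext (exteriorPowerToAugQuotient_basis e q)]
  rfl

end Isomorphism

section

variable {V : Type*} [AddCommGroup V] [Module (ZMod 2) V] [Module.Finite (ZMod 2) V] (q : ℕ)

theorem exteriorPowerToAugQuotient_injective :
    Function.Injective (exteriorPowerToAugQuotient (V := V) q) :=
  let e := Module.finBasis (ZMod 2) V
  LinearMap.injective_of_linearIndependent (e.exteriorPower q).span_eq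
    (linearIndependent_exteriorPowerToAugQuotient_comp_basis e q)

theorem range_exteriorPowerToAugQuotient :
    LinearMap.range (exteriorPowerToAugQuotient (V := V) q) =
      ((augIdeal V ^ q).restrictScalars (ZMod 2)).map
        ((augIdeal V ^ (q + 1)).restrictScalars (ZMod 2)).mkQ := by
  let e := Module.finBasis (ZMod 2) V
  rw [map_mkQ_augIdeal_pow_eq_span e, LinearMap.range_eq_map, ← (e.exteriorPower q).span_eq,
    Submodule.map_span, ← Set.range_comp]

end

/-- `I^q/I^{q+1}` is realised as the image of `I^q` in `𝔽₂[V]/I^{q+1}`: a map into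
`𝔽₂[V]/I^{q+1}` is an isomorphism onto `I^q/I^{q+1}` iff it is injective with that range. -/
theorem existsUnique_psi_and_iso {V : Type*} [AddCommGroup V] [Module (ZMod 2) V]
    [Module.Finite (ZMod 2) V] (q : ℕ) :
    (∃! ψ : (⋀[ZMod 2]^q V) →ₗ[ZMod 2]
        (AddMonoidAlgebra (ZMod 2) V ⧸
          Submodule.restrictScalars (ZMod 2) (augIdeal V ^ (q + 1))),
      ∀ v : Fin q → V,
        ψ ⟨ExteriorAlgebra.ιMulti (ZMod 2) q v,
            ExteriorAlgebra.ιMulti_range (ZMod 2) q (Set.mem_range_self v)⟩ =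
          Submodule.Quotient.mk (∏ i : Fin q, (ga (0 : V) + ga (v i)))) ∧
    (∀ ψ : (⋀[ZMod 2]^q V) →ₗ[ZMod 2]
        (AddMonoidAlgebra (ZMod 2) V ⧸
          Submodule.restrictScalars (ZMod 2) (augIdeal V ^ (q + 1))),
      (∀ v : Fin q → V,
        ψ ⟨ExteriorAlgebra.ιMulti (ZMod 2) q v,
            ExteriorAlgebra.ιMulti_range (ZMod 2) q (Set.mem_range_self v)⟩ =
          Submodule.Quotient.mk (∏ i : Fin q, (ga (0 : V) + ga (v i)))) →
      Function.Injective ψ ∧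
        LinearMap.range ψ =
          Submodule.map
            (Submodule.restrictScalars (ZMod 2) (augIdeal V ^ (q + 1))).mkQ
            (Submodule.restrictScalars (ZMod 2) (augIdeal V ^ q))) := by
  refine ⟨⟨_, exteriorPowerToAugQuotient_ιMulti q, fun ψ h => eq_exteriorPowerToAugQuotient h⟩,
    fun ψ h => ?_⟩
  obtain rfl := eq_exteriorPowerToAugQuotient h
  exact ⟨exteriorPowerToAugQuotient_injective q, range_exteriorPowerToAugQuotient q⟩
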